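/- arXiv:1707.03529 — 6 statements merged into one kernel-verified Lean document; each statement's English description precedes it below -/
import Mathlib

section
/- Let U ⊆ ℝⁿ, let f : ℝⁿ → ℝ be Lipschitz with constant L > 0 with respect to the sup norm, let ε > 0, and let C ⊆ U be a finite set of points with f(c) ≤ 0 for every c ∈ C. Define B = ⋃_{c ∈ C} { u ∈ ℝⁿ : ‖u − c‖_∞ < (ε + |f(c)|)/L }. If every u ∈ U \ B satisfies f(u) > 0, then { u ∈ U : f(u) ≤ 0 } ⊆ B and B ⊆ { u ∈ ℝⁿ : f(u) < ε }. -/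
/-- Lemma 2 (finRects): the union `B` of `ε`-inflated counterexample balls
over-approximates the refuted set `{u ∈ U | f u ≤ 0}` and under-approximates
the non-`ε`-robust set `{u | f u < ε}`. -/
theorem stmt_2 (n : ℕ) (U : Set (Fin n → ℝ)) (f : (Fin n → ℝ) → ℝ) (L ε : ℝ)
    (hL : 0 < L) (hε : 0 < ε)
    (hf : ∀ x y : Fin n → ℝ, |f x - f y| ≤ L * ‖x - y‖)
    (C : Finset (Fin n → ℝ)) (hCU : ↑C ⊆ U) (hC : ∀ c ∈ C, f c ≤ 0)
    (B : Set (Fin n → ℝ))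
    (hB : B = ⋃ c ∈ C, {u : Fin n → ℝ | ‖u - c‖ < (ε + |f c|) / L})
    (hterm : ∀ u ∈ U \ B, f u > 0) :
    {u ∈ U | f u ≤ 0} ⊆ B ∧ B ⊆ {u : Fin n → ℝ | f u < ε} := by
  constructor
  · intro u hu
    by_contra hB'
    exact absurd (hterm u ⟨hu.1, hB'⟩) (not_lt.mpr hu.2)
  · intro u hu
    rw [hB] at hu
    simp only [Set.mem_iUnion, Set.mem_setOf_eq] at hu
    obtain ⟨c, hc, hlt⟩ := hu
    have h1 : f u - f c ≤ L * ‖u - c‖ := le_trans (le_abs_self _) (hf u c)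
    have h2 : L * ‖u - c‖ < ε + |f c| := by
      calc L * ‖u - c‖ < L * ((ε + |f c|) / L) := by
            exact mul_lt_mul_of_pos_left hlt hL
        _ = ε + |f c| := by field_simp
    have hfc := hC c hc
    have : |f c| = -f c := abs_of_nonpos hfc
    simp only [Set.mem_setOf_eq]
    linarith
end

section
/- Let n be a positive natural number, let l : Fin n → ℝ with l_i ≥ 0 for each i, let R > 0, and let S be a subset of the box ∏_{i} [0, l_i] ⊆ ℝⁿ such that any two distinct points x, y ∈ S satisfy ‖x − y‖_∞ ≥ R. Then S is finite and has cardinality at most ∏_{i} (⌊l_i / R⌋ + 1). -/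
/-- Quantitative packing bound: an `R`-separated subset of the box `∏ᵢ [0, lᵢ]`
(sup norm) is finite with cardinality at most `∏ᵢ (⌊lᵢ/R⌋ + 1)`. -/
theorem stmt_4 (n : ℕ) (hn : 0 < n) (l : Fin n → ℝ) (hl : ∀ i, 0 ≤ l i)
    (R : ℝ) (hR : 0 < R) (S : Set (Fin n → ℝ))
    (hbox : ∀ x ∈ S, ∀ i, 0 ≤ x i ∧ x i ≤ l i)
    (hsep : ∀ x ∈ S, ∀ y ∈ S, x ≠ y → R ≤ ‖x - y‖) :
    S.Finite ∧ Nat.card S ≤ ∏ i : Fin n, (⌊l i / R⌋₊ + 1) := by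
  set f : S → ∀ i : Fin n, Fin (⌊l i / R⌋₊ + 1) := fun x i =>
    ⟨⌊(x : Fin n → ℝ) i / R⌋₊, by
      have hx := hbox x x.2 i
      have : ⌊(x : Fin n → ℝ) i / R⌋₊ ≤ ⌊l i / R⌋₊ :=
        Nat.floor_le_floor (by gcongr; exact hx.2)
      omega⟩ with hf
  have hinj : Function.Injective f := by
    intro x y hxy
    by_contra hne
    have hne' : (x : Fin n → ℝ) ≠ (y : Fin n → ℝ) := fun h => hne (Subtype.ext h)
    have hsep' := hsep x x.2 y y.2 hne'
    -- show ‖x - y‖ < R : each coordinate differs by < R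
    have hcoord : ∀ i, |(x : Fin n → ℝ) i - (y : Fin n → ℝ) i| < R := by
      intro i
      have hfx : ⌊(x : Fin n → ℝ) i / R⌋₊ = ⌊(y : Fin n → ℝ) i / R⌋₊ := by
        have := congrFun hxy i
        simpa [hf] using congrArg Fin.val this
      have hx0 : (0:ℝ) ≤ (x : Fin n → ℝ) i / R :=
        div_nonneg (hbox x x.2 i).1 hR.le
      have hy0 : (0:ℝ) ≤ (y : Fin n → ℝ) i / R :=
        div_nonneg (hbox y y.2 i).1 hR.le
      have h1 : (x : Fin n → ℝ) i / R - (y : Fin n → ℝ) i / R < 1 := by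
        have := Nat.lt_floor_add_one ((x : Fin n → ℝ) i / R)
        have hy := Nat.floor_le hy0
        rw [hfx] at this
        linarith
      have h2 : (y : Fin n → ℝ) i / R - (x : Fin n → ℝ) i / R < 1 := by
        have := Nat.lt_floor_add_one ((y : Fin n → ℝ) i / R)
        have hx := Nat.floor_le hx0
        rw [← hfx] at this
        linarith
      have : |(x : Fin n → ℝ) i / R - (y : Fin n → ℝ) i / R| < 1 :=
        abs_sub_lt_iff.2 ⟨h1, h2⟩
      rw [div_sub_div_same, abs_div, abs_of_pos hR, div_lt_one hR] at this
      exact this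
    have hlt : ‖(x : Fin n → ℝ) - (y : Fin n → ℝ)‖ < R := by
      have : ∀ i, ‖((x : Fin n → ℝ) - (y : Fin n → ℝ)) i‖ ≤ R - (R/2) ⊔ 0 ∨ True := fun _ => Or.inr trivial
      rw [pi_norm_lt_iff hR]
      intro i
      simpa [Real.norm_eq_abs] using hcoord i
    exact absurd hsep' (not_le.2 hlt)
  have hfin : S.Finite := by
    rw [← Set.finite_coe_iff]
    exact Finite.of_injective f hinj
  refine ⟨hfin, ?_⟩
  calc Nat.card S ≤ Nat.card (∀ i : Fin n, Fin (⌊l i / R⌋₊ + 1)) :=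
        Nat.card_le_card_of_injective f hinj
    _ = ∏ i : Fin n, (⌊l i / R⌋₊ + 1) := by simp
end

section
/- Let W ⊆ ℝᵐ be bounded, let L > 0 and ε > 0, let U be any type, and let ρ : U → ℝᵐ → ℝ be such that for every u ∈ U the function ρ(u, ·) is Lipschitz with constant L with respect to the sup norm on ℝᵐ. Then there do not exist infinite sequences u : ℕ → U and w : ℕ → W such that for every k, ρ(u_k, w_k) ≤ 0 and for every j < k, ρ(u_k, w_j) ≥ ε. -/
/-- Convergence of the modified CEGIS loop: over a bounded disturbance space `W`,
with robustness `ρ` uniformly `L`-Lipschitz in the disturbance (sup norm),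
there is no infinite run where each new counterexample `w k` refutes the
candidate `u k` while `u k` is `ε`-robust against all earlier counterexamples. -/
theorem stmt_6 (m : ℕ) (W : Set (Fin m → ℝ)) (hW : Bornology.IsBounded W)
    (L ε : ℝ) (hL : 0 < L) (hε : 0 < ε)
    (U : Type*) (ρ : U → (Fin m → ℝ) → ℝ)
    (hρ : ∀ u : U, ∀ x y : Fin m → ℝ, |ρ u x - ρ u y| ≤ L * ‖x - y‖) :
    ¬ ∃ (u : ℕ → U) (w : ℕ → Fin m → ℝ),
      (∀ k, w k ∈ W) ∧ (∀ k, ρ (u k) (w k) ≤ 0) ∧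
      (∀ j k, j < k → ε ≤ ρ (u k) (w j)) := by
  rintro ⟨u, w, hmem, hneg, hsep⟩
  -- separation: for j < k, dist (w j) (w k) ≥ ε / L
  have key : ∀ j k : ℕ, j < k → ε / L ≤ dist (w j) (w k) := by
    intro j k hjk
    have h1 : ε ≤ ρ (u k) (w j) - ρ (u k) (w k) := by
      have := hsep j k hjk
      have := hneg k
      linarith
    have h2 : ρ (u k) (w j) - ρ (u k) (w k) ≤ L * ‖w j - w k‖ :=
      le_trans (le_abs_self _) (hρ (u k) (w j) (w k))
    rw [dist_eq_norm]
    rw [div_le_iff₀ hL] at *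
    linarith [mul_comm L ‖w j - w k‖]
  -- the sequence lies in the compact closure of W
  have hcw : ∀ k, w k ∈ closure W := fun k => subset_closure (hmem k)
  obtain ⟨a, _, φ, hφ, hconv⟩ :=
    hW.isCompact_closure.tendsto_subseq hcw
  have hcauchy := hconv.cauchySeq
  rw [Metric.cauchySeq_iff] at hcauchy
  obtain ⟨N, hN⟩ := hcauchy (ε / L) (div_pos hε hL)
  have hlt : φ N < φ (N + 1) := hφ (Nat.lt_succ_self N)
  have := key (φ N) (φ (N + 1)) hlt
  have := hN (N + 1) (Nat.le_succ N) N le_rfl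
  simp only [Function.comp_apply, dist_comm] at this
  linarith
end

section
/- For every formula φ of the bounded discrete-time STL fragment, every signal ξ : ℕ → ℝⁿ, and every time t ∈ ℕ: if ρ^φ(ξ, t) > 0 then (ξ, t) ⊨ φ. -/
/-- Bounded discrete-time STL fragment over signals `ℕ → ℝⁿ`. -/
inductive STL (n : ℕ) : Type where
  | atom : ((Fin n → ℝ) → ℝ) → STL n
  | not : STL n → STL n
  | and : STL n → STL n → STL n
  | F : (a b : ℕ) → a ≤ b → STL n → STL n

/-- Boolean satisfaction of an STL formula by signal `ξ` at time `t`. -/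
def STL.sat {n : ℕ} : STL n → (ℕ → Fin n → ℝ) → ℕ → Prop
  | .atom g, ξ, t => g (ξ t) > 0
  | .not φ, ξ, t => ¬ φ.sat ξ t
  | .and φ ψ, ξ, t => φ.sat ξ t ∧ ψ.sat ξ t
  | .F a b _ φ, ξ, t => ∃ t', t + a ≤ t' ∧ t' ≤ t + b ∧ φ.sat ξ t'

/-- Quantitative robustness of an STL formula on signal `ξ` at time `t`. -/
def STL.rob {n : ℕ} : STL n → (ℕ → Fin n → ℝ) → ℕ → ℝ
  | .atom g, ξ, t => g (ξ t)
  | .not φ, ξ, t => - φ.rob ξ t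
  | .and φ ψ, ξ, t => min (φ.rob ξ t) (ψ.rob ξ t)
  | .F a b h φ, ξ, t =>
      (Finset.Icc (t + a) (t + b)).sup'
        (Finset.nonempty_Icc.mpr (by omega)) (fun t' => φ.rob ξ t')


lemma stl_sound_aux {n : ℕ} (φ : STL n) (ξ : ℕ → Fin n → ℝ) :
    ∀ t, (0 < φ.rob ξ t → φ.sat ξ t) ∧ (φ.rob ξ t < 0 → ¬ φ.sat ξ t) := by
  induction φ with
  | atom g => intro t; constructor <;> simp [STL.sat, STL.rob] <;> intro h <;> linarith
  | not φ ih =>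
    intro t
    refine ⟨fun h => (ih t).2 (by simpa [STL.rob] using h), fun h hs => ?_⟩
    exact hs ((ih t).1 (by simpa [STL.rob] using h))
  | and φ ψ ihφ ihψ =>
    intro t
    constructor
    · intro h
      simp only [STL.rob, lt_min_iff] at h
      exact ⟨(ihφ t).1 h.1, (ihψ t).1 h.2⟩
    · intro h hs
      simp only [STL.rob, min_lt_iff] at h
      rcases h with h | h
      · exact (ihφ t).2 h hs.1
      · exact (ihψ t).2 h hs.2
  | F a b hab φ ih =>
    intro t
    constructor
    · intro h
      simp only [STL.rob] at h
      obtain ⟨t', ht', hpos⟩ := (Finset.lt_sup'_iff _).mp h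
      rw [Finset.mem_Icc] at ht'
      exact ⟨t', ht'.1, ht'.2, (ih t').1 hpos⟩
    · intro h ⟨t', h1, h2, hs⟩
      simp only [STL.rob, Finset.sup'_lt_iff] at h
      exact (ih t').2 (h t' (Finset.mem_Icc.mpr ⟨h1, h2⟩)) hs

/-- Soundness of the quantitative semantics: positive robustness implies satisfaction. -/
theorem stmt_9 {n : ℕ} (φ : STL n) (ξ : ℕ → Fin n → ℝ) (t : ℕ)
    (h : 0 < φ.rob ξ t) : φ.sat ξ t := by
  exact (stl_sound_aux φ ξ t).1 h
end

section
/- For every formula φ of the bounded discrete-time STL fragment, every signal ξ : ℕ → ℝⁿ, and every time t ∈ ℕ: if ρ^φ(ξ, t) < 0 then (ξ, t) ⊭ φ. -/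
lemma stl_both {n : ℕ} (φ : STL n) :
    ∀ (ξ : ℕ → Fin n → ℝ) (t : ℕ),
      (φ.rob ξ t < 0 → ¬ φ.sat ξ t) ∧ (0 < φ.rob ξ t → φ.sat ξ t) := by
  induction φ with
  | atom g =>
    intro ξ t
    constructor
    · intro h hs; simp only [STL.sat] at hs; simp only [STL.rob] at h; linarith
    · intro h; exact h
  | not φ ih =>
    intro ξ t
    simp only [STL.rob, STL.sat, neg_lt_zero, neg_pos, not_not]
    exact ⟨fun h => (ih ξ t).2 h, fun h => (ih ξ t).1 h⟩
  | and φ ψ ihφ ihψ =>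
    intro ξ t
    simp only [STL.rob, STL.sat, lt_min_iff, min_lt_iff]
    constructor
    · rintro (h | h) ⟨h1, h2⟩
      · exact (ihφ ξ t).1 h h1
      · exact (ihψ ξ t).1 h h2
    · rintro ⟨h1, h2⟩
      exact ⟨(ihφ ξ t).2 h1, (ihψ ξ t).2 h2⟩
  | F a b hab φ ih =>
    intro ξ t
    simp only [STL.rob, STL.sat]
    constructor
    · intro h
      rw [Finset.sup'_lt_iff] at h
      rintro ⟨t', h1, h2, hs⟩
      exact (ih ξ t').1 (h t' (Finset.mem_Icc.mpr ⟨h1, h2⟩)) hs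
    · intro h
      rw [Finset.lt_sup'_iff] at h
      obtain ⟨t', ht', hpos⟩ := h
      rw [Finset.mem_Icc] at ht'
      exact ⟨t', ht'.1, ht'.2, (ih ξ t').2 hpos⟩

/-- Soundness of the quantitative semantics: negative robustness implies violation. -/
theorem stmt_10 {n : ℕ} (φ : STL n) (ξ : ℕ → Fin n → ℝ) (t : ℕ)
    (h : φ.rob ξ t < 0) : ¬ φ.sat ξ t :=
  (stl_both φ ξ t).1 h
end

section
/- Let K ≥ 0 and let φ be a formula of the bounded discrete-time STL fragment in which every atomic function g : ℝⁿ → ℝ is Lipschitz with constant K with respect to the sup norm on ℝⁿ. Then for all signals ξ, ξ' : ℕ → ℝⁿ, all d ≥ 0 with ‖ξ(s) − ξ'(s)‖_∞ ≤ d for every s ∈ ℕ, and all t ∈ ℕ, we have |ρ^φ(ξ, t) − ρ^φ(ξ', t)| ≤ K·d. -/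
/-- All atomic functions of the formula are Lipschitz with constant `K` w.r.t. the
sup norm on `ℝⁿ`. -/
def STL.atomsLipschitz {n : ℕ} (K : ℝ) : STL n → Prop
  | .atom g => ∀ x y : Fin n → ℝ, |g x - g y| ≤ K * ‖x - y‖
  | .not φ => φ.atomsLipschitz K
  | .and φ ψ => φ.atomsLipschitz K ∧ ψ.atomsLipschitz K
  | .F _ _ _ φ => φ.atomsLipschitz K

/-! Negation, `min` and a finite `sup'` each move by at most the largest change of their
arguments, so by induction on the formula the robustness moves by at most the largest change
of an atom, which is `K * d`. -/

namespace Finset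

variable {ι α : Type*} [AddCommGroup α] [LinearOrder α] [IsOrderedAddMonoid α]
  {s : Finset ι} {f g : ι → α} {c : α}

theorem sup'_le_sup'_add (hs : s.Nonempty) (h : ∀ i ∈ s, f i ≤ g i + c) : s.sup' hs f ≤ s.sup' hs g + c :=
  sup'_le hs f fun i hi => (h i hi).trans (add_le_add_left (le_sup' g hi) c)

theorem abs_sup'_sub_sup'_le (hs : s.Nonempty) (h : ∀ i ∈ s, |f i - g i| ≤ c) :
    |s.sup' hs f - s.sup' hs g| ≤ c := by
  rw [abs_sub_le_iff, sub_le_iff_le_add', sub_le_iff_le_add']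
  constructor <;> refine sup'_le_sup'_add hs fun i hi => ?_
  · exact sub_le_iff_le_add'.mp (abs_sub_le_iff.mp (h i hi)).1
  · exact sub_le_iff_le_add'.mp (abs_sub_le_iff.mp (h i hi)).2

end Finset

theorem stmt_11_general {n : ℕ} (K : ℝ) (hK : 0 ≤ K) (φ : STL n)
    (hφ : φ.atomsLipschitz K)
    (ξ ξ' : ℕ → Fin n → ℝ) (d : ℝ)
    (hclose : ∀ s : ℕ, ‖ξ s - ξ' s‖ ≤ d) (t : ℕ) :
    |φ.rob ξ t - φ.rob ξ' t| ≤ K * d := by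
  induction φ generalizing t with
  | atom g =>
    calc |g (ξ t) - g (ξ' t)| ≤ K * ‖ξ t - ξ' t‖ := hφ _ _
      _ ≤ K * d := mul_le_mul_of_nonneg_left (hclose t) hK
  | not φ ih =>
    simpa only [STL.rob, neg_sub_neg, abs_sub_comm] using ih hφ t
  | and φ ψ ihφ ihψ =>
    exact (abs_min_sub_min_le_max _ _ _ _).trans (max_le (ihφ hφ.1 t) (ihψ hφ.2 t))
  | F _ _ _ φ ih =>
    exact Finset.abs_sup'_sub_sup'_le _ fun s _ => ih hφ s

/-- The robustness inherits the Lipschitz constant of the worst atomic predicate: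
if all atoms are `K`-Lipschitz and the two signals are pointwise within `d`
in sup norm, then the robustness values differ by at most `K·d`. -/
theorem stmt_11 {n : ℕ} (K : ℝ) (hK : 0 ≤ K) (φ : STL n)
    (hφ : φ.atomsLipschitz K)
    (ξ ξ' : ℕ → Fin n → ℝ) (d : ℝ) (hd : 0 ≤ d)
    (hclose : ∀ s : ℕ, ‖ξ s - ξ' s‖ ≤ d) (t : ℕ) :
    |φ.rob ξ t - φ.rob ξ' t| ≤ K * d :=
  stmt_11_general K hK φ hφ ξ ξ' d hclose t
end
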